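/- Let α = 0, μ(t) = 2/t, β(t) = t/2, and ζ_W(φ,t) = Σ_{ℓ=1}^∞ (e^{−μ(t)}/(1−e^{−μ(t)})) (μ(t)^ℓ/ℓ!) (1 + β(t)φ/t)^{−ℓ}. Then for every φ ≥ 0, lim_{t→∞} ζ_W(φ,t) = 1/(1 + φ/2). -/

import Mathlib

open Real Filter Topology

/-!
With `m = μ(t) = 2/t` and `r = 1 + β(t)φ/t = 1 + φ/2`, `ζ_W(φ,t)` is `E[r^{-N}]` for a zero-truncated
Poisson(`m`) variable `N`, which sums in closed form to `(e^{m/r} - 1)/(e^m - 1)`. As `t → ∞`, `m → 0`,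
and this quotient of two difference quotients of `exp` at `0` tends to `(1/r)/1`.
-/

lemma Real.hasSum_pow_succ_div_factorial (x : ℝ) :
    HasSum (fun n : ℕ => x ^ (n + 1) / (n + 1).factorial) (exp x - 1) := by
  have h := (hasSum_nat_add_iff' 1).mpr (NormedSpace.expSeries_div_hasSum_exp x)
  simpa [← Real.exp_eq_exp_ℝ] using h

lemma Real.tendsto_exp_mul_sub_one_div (c : ℝ) :
    Tendsto (fun x => (exp (c * x) - 1) / x) (𝓝[≠] 0) (𝓝 c) := by
  have h : HasDerivAt (fun x => exp (c * x)) c 0 := by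
    simpa using ((hasDerivAt_id 0).const_mul c).exp
  simpa [slope_fun_def_field] using hasDerivAt_iff_tendsto_slope.mp h

lemma Real.tendsto_exp_mul_sub_one_div_exp_sub_one (c : ℝ) :
    Tendsto (fun x => (exp (c * x) - 1) / (exp x - 1)) (𝓝[≠] 0) (𝓝 c) := by
  have h := (tendsto_exp_mul_sub_one_div c).div (by simpa using tendsto_exp_mul_sub_one_div 1)
    one_ne_zero
  rw [div_one] at h
  refine h.congr' ?_
  filter_upwards [self_mem_nhdsWithin] with x hx
  rw [Pi.div_apply, div_div_div_cancel_right₀ hx]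

lemma hasSum_zeroTruncatedPoisson_mul_rpow_neg {r : ℝ} (hr : 0 ≤ r) (m : ℝ) :
    HasSum (fun ℓ : ℕ => exp (-m) / (1 - exp (-m)) * m ^ (ℓ + 1) / (ℓ + 1).factorial *
      r ^ (-((ℓ : ℝ) + 1))) ((exp (r⁻¹ * m) - 1) / (exp m - 1)) := by
  have hpref : exp (-m) / (1 - exp (-m)) = (exp m - 1)⁻¹ := by
    rw [← mul_div_mul_left _ _ (exp_pos m).ne', mul_sub, mul_one, ← exp_add, add_neg_cancel,
      exp_zero, one_div]
  rw [div_eq_inv_mul (exp (r⁻¹ * m) - 1)]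
  refine ((hasSum_pow_succ_div_factorial (r⁻¹ * m)).mul_left (exp m - 1)⁻¹).congr_fun fun ℓ => ?_
  rw [hpref, show -((ℓ : ℝ) + 1) = -((ℓ + 1 : ℕ) : ℝ) by push_cast; ring, rpow_neg hr,
    rpow_natCast, mul_pow, inv_pow]
  ring

lemma tendsto_const_div_atTop_nhdsNE {c : ℝ} (hc : c ≠ 0) :
    Tendsto (fun t : ℝ => c / t) atTop (𝓝[≠] 0) := by
  refine tendsto_nhdsWithin_iff.mpr ⟨tendsto_const_nhds.div_atTop tendsto_id, ?_⟩
  filter_upwards [eventually_gt_atTop 0] with t ht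
  exact div_ne_zero hc ht.ne'

/-- Yaglom limit for the critical (`α = 0`) Feller diffusion: the Laplace transform
`ζ_W(φ,t)` of `X(t)/t` conditioned on non-extinction converges to `1/(1 + φ/2)`. -/
theorem critical_yaglom_limit (μ β : ℝ → ℝ)
    (hμ : ∀ t : ℝ, μ t = 2 / t) (hβ : ∀ t : ℝ, β t = t / 2)
    (ζW : ℝ → ℝ → ℝ)
    (hζW : ∀ φ t : ℝ, ζW φ t =
      ∑' ℓ : ℕ, Real.exp (-(μ t)) / (1 - Real.exp (-(μ t))) *
        (μ t) ^ (ℓ + 1) / (Nat.factorial (ℓ + 1)) *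
          (1 + β t * φ / t) ^ (-((ℓ : ℝ) + 1))) :
    ∀ φ : ℝ, 0 ≤ φ →
      Tendsto (fun t => ζW φ t) atTop (𝓝 (1 / (1 + φ / 2))) := by
  intro φ hφ
  have hr : 0 ≤ 1 + φ / 2 := by positivity
  rw [one_div]
  refine ((tendsto_exp_mul_sub_one_div_exp_sub_one _).comp
    (tendsto_const_div_atTop_nhdsNE two_ne_zero)).congr' ?_
  filter_upwards [eventually_ne_atTop 0] with t ht
  have hbase : 1 + β t * φ / t = 1 + φ / 2 := by
    rw [hβ]
    field_simp
  rw [hζW, hμ, hbase, (hasSum_zeroTruncatedPoisson_mul_rpow_neg hr _).tsum_eq,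
    Function.comp_apply]
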